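/- arXiv:1004.3088 — 2 statements merged into one kernel-verified Lean document; each statement's English description precedes it below -/
import Mathlib

section
/- Let Σ = S^{n-1} with n ≥ 3, and define ψ : Σ → ℝ by ψ = -1 + ((n-1)/2) x_n^2 + ((n-1)(n+1)/24) x_n^4 + ((n-1)(n+1)(n+3)/240) x_n^6, where x_n is the restriction of the last coordinate. Then Δ_Σ ψ + (n-1) ψ = -((n-1)(n+1)(n+3)(n+5)/48) x_n^6, which is ≤ 0 everywhere on Σ. -/
open MeasureTheory
open scoped RealInnerProductSpace

noncomputable section

/-- Degree-zero homogeneous extension of a function on `ℝ^n`, used to compute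
intrinsic operators on the unit sphere extrinsically: the extension agrees with
`f` on the unit sphere and is constant along rays from the origin. -/
def sphExt {n : ℕ} (f : EuclideanSpace ℝ (Fin n) → ℝ) (y : EuclideanSpace ℝ (Fin n)) : ℝ :=
  f (‖y‖⁻¹ • y)

/-- The Laplace–Beltrami operator of the round unit sphere, computed at a point of the
sphere as the Euclidean Laplacian of the degree-zero homogeneous extension. -/
def sphLaplacian {n : ℕ} (f : EuclideanSpace ℝ (Fin n) → ℝ) (x : EuclideanSpace ℝ (Fin n)) : ℝ :=
  ∑ i : Fin n, fderiv ℝ (fun y => fderiv ℝ (sphExt f) y (EuclideanSpace.single i 1)) x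
    (EuclideanSpace.single i 1)

/-- The intrinsic (tangential) gradient on the round unit sphere, computed at a point of
the sphere as the Euclidean gradient of the degree-zero homogeneous extension. -/
def sphGradient {n : ℕ} (f : EuclideanSpace ℝ (Fin n) → ℝ) (x : EuclideanSpace ℝ (Fin n)) :
    EuclideanSpace ℝ (Fin n) :=
  gradient (sphExt f) x

/-! The function `ψ` depends only on `t = x_n`, and for `ψ = g(x_n)` the chain rule together with
`Δ_Σ x_n = -(n-1) x_n` and `|∇_Σ x_n|² = 1 - x_n²` gives
`Δ_Σ ψ = (1 - t²) g''(t) - (n-1) t g'(t)`; extrinsically, this is the Euclidean Laplacian of the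
degree-zero extension `g(y_p / ‖y‖)` evaluated on the sphere. For the sextic `g` of the statement the coefficients
are chosen so that everything except the top-degree term cancels in `Δ_Σ ψ + (n-1) ψ`. -/

theorem hasFDerivAt_inv_norm {E : Type*} [NormedAddCommGroup E] [InnerProductSpace ℝ E] {y : E}
    (hy : y ≠ 0) : HasFDerivAt (fun z : E => ‖z‖⁻¹) (-(‖y‖ ^ 3)⁻¹ • innerSL ℝ y) y := by
  have hnorm : HasFDerivAt (fun z : E => √(‖z‖ ^ 2)) ((1 / (2 * √(‖y‖ ^ 2))) • 2 • innerSL ℝ y) y :=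
    (Real.hasDerivAt_sqrt (by positivity)).comp_hasFDerivAt y
      (hasStrictFDerivAt_norm_sq y).hasFDerivAt
  have h := (hasDerivAt_inv (by positivity)).comp_hasFDerivAt y hnorm
  simp only [Function.comp_def, Real.sqrt_sq (norm_nonneg _)] at h
  refine h.congr_fderiv ?_
  ext v
  simp only [one_div, mul_inv_rev, neg_smul, neg_apply, smul_apply, coe_innerSL_apply,
    nsmul_eq_mul, Nat.cast_ofNat, smul_eq_mul]
  field_simp

section

open EuclideanSpace

variable {n : ℕ} (p : Fin n)

theorem sphExt_comp_apply (g : ℝ → ℝ) :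
    sphExt (fun y : EuclideanSpace ℝ (Fin n) => g (y p)) = fun y => g (‖y‖⁻¹ * y p) :=
  rfl

theorem hasFDerivAt_inv_norm_mul_apply {y : EuclideanSpace ℝ (Fin n)} (hy : y ≠ 0) :
    HasFDerivAt (fun z : EuclideanSpace ℝ (Fin n) => ‖z‖⁻¹ * z p)
      (‖y‖⁻¹ • proj p + y p • (-(‖y‖ ^ 3)⁻¹ • innerSL ℝ y)) y :=
  (hasFDerivAt_inv_norm hy).mul (proj p : EuclideanSpace ℝ (Fin n) →L[ℝ] ℝ).hasFDerivAt

theorem fderiv_sphExt_comp_apply_single {g g' : ℝ → ℝ} (hg : ∀ t, HasDerivAt g (g' t) t)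
    (i : Fin n) {y : EuclideanSpace ℝ (Fin n)} (hy : y ≠ 0) :
    fderiv ℝ (sphExt fun z : EuclideanSpace ℝ (Fin n) => g (z p)) y (single i 1) =
      g' (‖y‖⁻¹ * y p) * (‖y‖⁻¹ * (if p = i then 1 else 0) - y p * y i * ‖y‖⁻¹ ^ 3) := by
  have h : HasFDerivAt (fun z => g (‖z‖⁻¹ * z p)) _ y :=
    (hg _).comp_hasFDerivAt y (hasFDerivAt_inv_norm_mul_apply p hy)
  rw [sphExt_comp_apply, h.fderiv]
  simp only [neg_smul, smul_neg, smul_add, add_apply, smul_apply, PiLp.proj_apply,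
    PiLp.single_apply, smul_eq_mul, mul_ite, mul_one, mul_zero, neg_apply, coe_innerSL_apply,
    inner_single_right, Real.ringHom_apply, one_mul, inv_pow]
  split_ifs <;> ring

theorem fderiv_fderiv_sphExt_comp_apply_single {g g' g'' : ℝ → ℝ}
    (hg : ∀ t, HasDerivAt g (g' t) t) (hg' : ∀ t, HasDerivAt g' (g'' t) t)
    (i : Fin n) {x : EuclideanSpace ℝ (Fin n)} (hx : ‖x‖ = 1) :
    fderiv ℝ (fun y => fderiv ℝ (sphExt fun z : EuclideanSpace ℝ (Fin n) => g (z p)) y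
        (single i 1)) x (single i 1) =
      g'' (x p) * ((if p = i then 1 else 0) - x p * x i) ^ 2
        + g' (x p) * (3 * x p * x i ^ 2 - 2 * (if p = i then 1 else 0) * x i - x p) := by
  have hx0 : x ≠ 0 := by rintro rfl; simp at hx
  have hev : (fun y => fderiv ℝ (sphExt fun z : EuclideanSpace ℝ (Fin n) => g (z p)) y
      (single i 1)) =ᶠ[nhds x] fun y =>
        g' (‖y‖⁻¹ * y p) * (‖y‖⁻¹ * (if p = i then 1 else 0) - y p * y i * ‖y‖⁻¹ ^ 3) := by
    filter_upwards [isOpen_ne.mem_nhds hx0] with y hy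
    exact fderiv_sphExt_comp_apply_single p hg i hy
  have hw := hasFDerivAt_inv_norm hx0
  have hd : HasFDerivAt (fun y : EuclideanSpace ℝ (Fin n) =>
      g' (‖y‖⁻¹ * y p) * (‖y‖⁻¹ * (if p = i then 1 else 0) - y p * y i * ‖y‖⁻¹ ^ 3)) _ x :=
    ((hg' _).comp_hasFDerivAt x (hasFDerivAt_inv_norm_mul_apply p hx0)).mul
      ((hw.mul_const _).sub (((proj p : EuclideanSpace ℝ (Fin n) →L[ℝ] ℝ).hasFDerivAt.mul
        (proj i : EuclideanSpace ℝ (Fin n) →L[ℝ] ℝ).hasFDerivAt).mul (hw.pow 3)))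
  rw [hev.fderiv_eq, hd.fderiv]
  simp only [Function.comp_apply, hx, inv_one, one_mul, one_pow, neg_smul, smul_neg, coe_proj,
    Pi.mul_apply, Nat.add_one_sub_one, nsmul_eq_mul, Nat.cast_ofNat, mul_one, PiLp.proj_apply,
    smul_add, add_apply, neg_apply, smul_apply, sub_apply, coe_innerSL_apply, inner_single_right,
    Real.ringHom_apply, smul_eq_mul, PiLp.single_apply]
  split_ifs with hpi
  · subst hpi
    ring
  · ring

theorem sphLaplacian_comp_apply {g g' g'' : ℝ → ℝ}
    (hg : ∀ t, HasDerivAt g (g' t) t) (hg' : ∀ t, HasDerivAt g' (g'' t) t)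
    {x : EuclideanSpace ℝ (Fin n)} (hx : ‖x‖ = 1) :
    sphLaplacian (fun y => g (y p)) x = (1 - x p ^ 2) * g'' (x p) - (n - 1) * x p * g' (x p) := by
  have hsq : ∑ i, x i ^ 2 = 1 := by simpa [hx] using (real_norm_sq_eq x).symm
  have hterm : ∀ i : Fin n,
      g'' (x p) * ((if p = i then 1 else 0) - x p * x i) ^ 2
        + g' (x p) * (3 * x p * x i ^ 2 - 2 * (if p = i then 1 else 0) * x i - x p) =
      (if p = i then g'' (x p) * (1 - 2 * x p * x i) - 2 * g' (x p) * x i else 0)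
        + (g'' (x p) * x p ^ 2 + 3 * g' (x p) * x p) * x i ^ 2 - g' (x p) * x p := by
    -- uses `δ² = δ` for the Kronecker delta `δ = if p = i then 1 else 0`
    intro i
    split_ifs <;> ring
  simp only [sphLaplacian, fderiv_fderiv_sphExt_comp_apply_single p hg hg' _ hx, hterm,
    Finset.sum_sub_distrib, Finset.sum_add_distrib, Finset.sum_ite_eq, Finset.mem_univ, if_true,
    ← Finset.mul_sum, hsq, Finset.sum_const, Finset.card_univ, Fintype.card_fin, nsmul_eq_mul]
  ring

theorem sphLaplacian_even_sextic (a b c d : ℝ) {x : EuclideanSpace ℝ (Fin n)} (hx : ‖x‖ = 1) :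
    sphLaplacian (fun y => d + a * y p ^ 2 + b * y p ^ 4 + c * y p ^ 6) x =
      (1 - x p ^ 2) * (2 * a + 12 * b * x p ^ 2 + 30 * c * x p ^ 4)
        - (n - 1) * x p * (2 * a * x p + 4 * b * x p ^ 3 + 6 * c * x p ^ 5) := by
  refine sphLaplacian_comp_apply p (g := fun t => d + a * t ^ 2 + b * t ^ 4 + c * t ^ 6)
    (g' := fun t => 2 * a * t + 4 * b * t ^ 3 + 6 * c * t ^ 5)
    (g'' := fun t => 2 * a + 12 * b * t ^ 2 + 30 * c * t ^ 4) (fun t => ?_) (fun t => ?_) hx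
  · refine (((((hasDerivAt_pow 2 t).const_mul a).const_add d).add
      ((hasDerivAt_pow 4 t).const_mul b)).add ((hasDerivAt_pow 6 t).const_mul c)).congr_deriv ?_
    norm_num
    ring
  · refine ((((hasDerivAt_id t).const_mul (2 * a)).add
      ((hasDerivAt_pow 3 t).const_mul (4 * b))).add
        ((hasDerivAt_pow 5 t).const_mul (6 * c))).congr_deriv ?_
    norm_num
    ring

end

/-- For `Σ = S^{n-1}` with `n ≥ 3` and
`ψ = -1 + ((n-1)/2) x_n² + ((n-1)(n+1)/24) x_n⁴ + ((n-1)(n+1)(n+3)/240) x_n⁶`, one has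
`Δ_Σ ψ + (n-1) ψ = -((n-1)(n+1)(n+3)(n+5)/48) x_n⁶ ≤ 0` everywhere on `Σ`. -/
theorem stmt_3 (n : ℕ) (hn : 3 ≤ n) :
    ∀ x ∈ Metric.sphere (0 : EuclideanSpace ℝ (Fin n)) 1,
      sphLaplacian (fun y =>
          -1 + (((n : ℝ) - 1) / 2) * (y ⟨n - 1, by omega⟩) ^ 2
            + (((n : ℝ) - 1) * ((n : ℝ) + 1) / 24) * (y ⟨n - 1, by omega⟩) ^ 4
            + (((n : ℝ) - 1) * ((n : ℝ) + 1) * ((n : ℝ) + 3) / 240) * (y ⟨n - 1, by omega⟩) ^ 6)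
          x
        + ((n : ℝ) - 1) *
          (-1 + (((n : ℝ) - 1) / 2) * (x ⟨n - 1, by omega⟩) ^ 2
            + (((n : ℝ) - 1) * ((n : ℝ) + 1) / 24) * (x ⟨n - 1, by omega⟩) ^ 4
            + (((n : ℝ) - 1) * ((n : ℝ) + 1) * ((n : ℝ) + 3) / 240) * (x ⟨n - 1, by omega⟩) ^ 6)
        = -(((n : ℝ) - 1) * ((n : ℝ) + 1) * ((n : ℝ) + 3) * ((n : ℝ) + 5) / 48) *
            (x ⟨n - 1, by omega⟩) ^ 6
      ∧ -(((n : ℝ) - 1) * ((n : ℝ) + 1) * ((n : ℝ) + 3) * ((n : ℝ) + 5) / 48) *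
            (x ⟨n - 1, by omega⟩) ^ 6 ≤ 0 := by
  intro x hx
  refine ⟨?_, ?_⟩
  · rw [sphLaplacian_even_sextic _ _ _ _ _ (by simpa using hx)]
    ring
  · rw [neg_mul, neg_nonpos, ← Nat.cast_pred (by omega)]
    positivity
end
end

section
/- There exists δ₀ > 0 such that for all 0 < δ < δ₀, the function e^{-1/(f-δ)} is subharmonic on the region {δ < f < 3δ} ⊂ S^n, where f is the restriction of x_{n+1} to the round sphere S^n. -/
/-
With `f = x_{n+1}` and `φ t = exp (-(t - δ)⁻¹)`, the chain rule together with `|∇f|² = 1 - f²`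
and `Δf = -n f` gives `Δ(φ ∘ f) = φ''(f) (1 - f²) - n f φ'(f)`. Since
`φ' = φ σ⁻²` and `φ'' = φ (σ⁻⁴ - 2σ⁻³)` with `σ = f - δ`, this equals
`φ(f) σ⁻⁴ ((1 - 2σ)(1 - f²) - n f σ²)`. On `{δ < f < 3δ}` both `σ` and `f` are `O(δ)`, so the
bracket is close to `1` once `δ ≪ 1/n`; `δ₀ = 1/(6(n+1))` suffices.
The identities for `f` are computed from its degree-zero extension `‖y‖⁻¹ ⟪a, y⟫`, `a = e_{n+1}`.
-/

open MeasureTheory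
open scoped RealInnerProductSpace

noncomputable section

open Filter Topology

section NormalizedInner
variable {F : Type*} [NormedAddCommGroup F] [InnerProductSpace ℝ F]

theorem hasFDerivAt_norm_inv {x : F} (hx : x ≠ 0) :
    HasFDerivAt (fun y : F => ‖y‖⁻¹) (-‖x‖⁻¹ ^ 3 • innerSL ℝ x) x := by
  have hx' : ‖x‖ ≠ 0 := norm_ne_zero_iff.2 hx
  have hnorm : HasFDerivAt (fun y : F => ‖y‖) (‖x‖⁻¹ • innerSL ℝ x) x := by
    have h := (hasStrictFDerivAt_norm_sq x).hasFDerivAt.sqrt (by positivity)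
    simp only [Real.sqrt_sq (norm_nonneg _)] at h
    refine h.congr_fderiv ?_
    ext v
    simp only [smul_apply, coe_innerSL_apply, smul_eq_mul, nsmul_eq_mul, Nat.cast_ofNat]
    field_simp
  refine ((hasDerivAt_inv hx').comp_hasFDerivAt x hnorm).congr_fderiv ?_
  ext v
  simp only [smul_apply, neg_apply, coe_innerSL_apply, smul_eq_mul, neg_smul, inv_pow]
  field_simp

variable (a : F)

def normalizedInner (y : F) : ℝ := ‖y‖⁻¹ * ⟪a, y⟫

def normalizedInnerDeriv (y : F) : F →L[ℝ] ℝ :=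
  ‖y‖⁻¹ • innerSL ℝ a - (⟪a, y⟫ * ‖y‖⁻¹ ^ 3) • innerSL ℝ y

theorem normalizedInnerDeriv_apply (y e : F) :
    normalizedInnerDeriv a y e = ‖y‖⁻¹ * ⟪a, e⟫ - ⟪a, y⟫ * ‖y‖⁻¹ ^ 3 * ⟪y, e⟫ := by
  simp [normalizedInnerDeriv]

theorem hasFDerivAt_normalizedInner {x : F} (hx : x ≠ 0) :
    HasFDerivAt (normalizedInner a) (normalizedInnerDeriv a x) x := by
  refine ((hasFDerivAt_norm_inv hx).mul ((innerSL ℝ a).hasFDerivAt (x := x))).congr_fderiv ?_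
  ext v
  simp only [normalizedInnerDeriv_apply, add_apply, smul_apply, neg_apply, coe_innerSL_apply,
    smul_eq_mul, neg_smul]
  ring

theorem exists_hasFDerivAt_normalizedInnerDeriv_apply {x : F} (hx : ‖x‖ = 1) (e : F) :
    ∃ G : F →L[ℝ] ℝ, HasFDerivAt (fun y => normalizedInnerDeriv a y e) G x ∧
      G e = -2 * ⟪a, e⟫ * ⟪x, e⟫ - ⟪a, x⟫ * ‖e‖ ^ 2 + 3 * ⟪a, x⟫ * ⟪x, e⟫ ^ 2 := by
  have hx0 : x ≠ 0 := norm_ne_zero_iff.1 (by rw [hx]; norm_num)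
  have hN := hasFDerivAt_norm_inv hx0
  have h := (hN.mul_const ⟪a, e⟫).sub
    ((((innerSL ℝ a).hasFDerivAt (x := x)).mul (hN.pow 3)).mul
      ((innerSL ℝ e).hasFDerivAt (x := x)))
  refine ⟨_, h.congr_of_eventuallyEq (Eventually.of_forall fun y => ?_), ?_⟩
  · simp [normalizedInnerDeriv_apply, real_inner_comm e y]
  · simp only [sub_apply, add_apply, smul_apply, neg_apply, coe_innerSL_apply, smul_eq_mul,
      neg_smul, Pi.mul_apply, hx, inv_one, one_pow, real_inner_comm x e, real_inner_self_eq_norm_sq]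
    ring

end NormalizedInner

theorem fderiv_fderiv_comp_apply_self {F : Type*} [NormedAddCommGroup F] [NormedSpace ℝ F]
    {g : F → ℝ} {g' : F → F →L[ℝ] ℝ} {φ φ' : ℝ → ℝ} {φ'' : ℝ} {G : F →L[ℝ] ℝ} {x : F} (e : F)
    (hg : ∀ᶠ y in 𝓝 x, HasFDerivAt g (g' y) y)
    (hφ : ∀ᶠ s in 𝓝 (g x), HasDerivAt φ (φ' s) s) (hφ' : HasDerivAt φ' φ'' (g x))
    (hG : HasFDerivAt (fun y => g' y e) G x) :
    fderiv ℝ (fun y => fderiv ℝ (φ ∘ g) y e) x e = φ'' * g' x e ^ 2 + φ' (g x) * G e := by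
  have hgx := hg.self_of_nhds
  have hfirst : (fun y => fderiv ℝ (φ ∘ g) y e) =ᶠ[𝓝 x] fun y => φ' (g y) * g' y e := by
    filter_upwards [hg, hgx.continuousAt.eventually hφ] with y hgy hφy
    simp [(hφy.comp_hasFDerivAt y hgy).fderiv]
  have hsecond : HasFDerivAt (fun y => φ' (g y) * g' y e) _ x :=
    (hφ'.comp_hasFDerivAt x hgx).mul hG
  rw [hfirst.fderiv_eq, hsecond.fderiv]
  simp only [Function.comp_apply, add_apply, smul_apply, smul_eq_mul]
  ring

theorem sphLaplacian_comp_apply_s11 {n : ℕ} {φ φ' : ℝ → ℝ} {φ'' : ℝ}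
    {x : EuclideanSpace ℝ (Fin (n + 1))} (i : Fin (n + 1)) (hx : ‖x‖ = 1)
    (hφ : ∀ᶠ s in 𝓝 (x i), HasDerivAt φ (φ' s) s) (hφ' : HasDerivAt φ' φ'' (x i)) :
    sphLaplacian (fun y => φ (y i)) x = φ'' * (1 - x i ^ 2) - n * x i * φ' (x i) := by
  set a : EuclideanSpace ℝ (Fin (n + 1)) := EuclideanSpace.single i 1
  have hext : sphExt (fun y => φ (y i)) = φ ∘ normalizedInner a := by
    funext y
    simp [sphExt, normalizedInner, a, EuclideanSpace.inner_single_left]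
  have hx0 : x ≠ 0 := norm_ne_zero_iff.1 (by rw [hx]; norm_num)
  have hxi : normalizedInner a x = x i := by
    simp [normalizedInner, a, hx, EuclideanSpace.inner_single_left]
  have hg : ∀ᶠ y in 𝓝 x, HasFDerivAt (normalizedInner a) (normalizedInnerDeriv a y) y :=
    (eventually_ne_nhds hx0).mono fun y hy => hasFDerivAt_normalizedInner a hy
  have hterm : ∀ j, fderiv ℝ (fun y => fderiv ℝ (sphExt fun y => φ (y i)) y
      (EuclideanSpace.single j 1)) x (EuclideanSpace.single j 1) =
      (if j = i then 1 else 0) * (φ'' * (1 - 2 * x i ^ 2) - 2 * φ' (x i) * x i) +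
        x j ^ 2 * (φ'' * x i ^ 2 + 3 * φ' (x i) * x i) - φ' (x i) * x i := by
    intro j
    obtain ⟨G, hG, hGe⟩ :=
      exists_hasFDerivAt_normalizedInnerDeriv_apply a hx (EuclideanSpace.single j 1)
    rw [hext, fderiv_fderiv_comp_apply_self _ hg (hxi ▸ hφ) (hxi ▸ hφ') hG, hGe,
      normalizedInnerDeriv_apply, hxi]
    simp only [a, hx, inv_one, one_mul, mul_one, one_pow, EuclideanSpace.inner_single_left,
      EuclideanSpace.inner_single_right, Real.ringHom_apply, PiLp.single_apply, PiLp.norm_single,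
      norm_one]
    split_ifs with hji
    · subst hji; ring
    · ring
  have hsq : ∑ j, x j ^ 2 = 1 := by rw [← EuclideanSpace.real_norm_sq_eq, hx, one_pow]
  simp only [sphLaplacian, hterm, Finset.sum_sub_distrib, Finset.sum_add_distrib,
    ← Finset.sum_mul, hsq, Finset.sum_ite_eq', Finset.mem_univ, if_true, Finset.sum_const,
    Finset.card_univ, Fintype.card_fin, nsmul_eq_mul]
  push_cast
  ring

theorem hasDerivAt_exp_neg_inv_sub {δ t : ℝ} (ht : t ≠ δ) :
    HasDerivAt (fun s => Real.exp (-(s - δ)⁻¹)) (Real.exp (-(t - δ)⁻¹) * (t - δ)⁻¹ ^ 2) t := by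
  have h := (((hasDerivAt_id t).sub_const δ).fun_inv (sub_ne_zero.2 ht)).neg.exp
  refine h.congr_deriv ?_
  simp only [id_eq, Pi.neg_apply, inv_pow]
  ring

theorem hasDerivAt_exp_neg_inv_sub_mul_inv_sq {δ t : ℝ} (ht : t ≠ δ) :
    HasDerivAt (fun s => Real.exp (-(s - δ)⁻¹) * (s - δ)⁻¹ ^ 2)
      (Real.exp (-(t - δ)⁻¹) * ((t - δ)⁻¹ ^ 4 - 2 * (t - δ)⁻¹ ^ 3)) t := by
  have h := (hasDerivAt_exp_neg_inv_sub ht).mul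
    ((((hasDerivAt_id t).sub_const δ).fun_inv (sub_ne_zero.2 ht)).pow 2)
  have : t - δ ≠ 0 := sub_ne_zero.2 ht
  refine h.congr_deriv ?_
  simp only [id_eq, Pi.pow_apply, inv_pow]
  field_simp
  ring

theorem sphLaplacian_exp_neg_inv_sub {n : ℕ} {δ : ℝ} {x : EuclideanSpace ℝ (Fin (n + 1))}
    (i : Fin (n + 1)) (hx : ‖x‖ = 1) (hxi : x i ≠ δ) :
    sphLaplacian (fun y => Real.exp (-(y i - δ)⁻¹)) x = Real.exp (-(x i - δ)⁻¹) *
      (x i - δ)⁻¹ ^ 4 * ((1 - 2 * (x i - δ)) * (1 - x i ^ 2) - n * x i * (x i - δ) ^ 2) := by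
  have hφ : ∀ᶠ s in 𝓝 (x i), HasDerivAt (fun s => Real.exp (-(s - δ)⁻¹))
      (Real.exp (-(s - δ)⁻¹) * (s - δ)⁻¹ ^ 2) s :=
    (eventually_ne_nhds hxi).mono fun s hs => hasDerivAt_exp_neg_inv_sub hs
  rw [sphLaplacian_comp_apply_s11 i hx hφ (hasDerivAt_exp_neg_inv_sub_mul_inv_sq hxi)]
  have : x i - δ ≠ 0 := sub_ne_zero.2 hxi
  field_simp

theorem one_sub_two_mul_mul_one_sub_sq_sub_nonneg {n : ℕ} {t σ : ℝ} (ht : 0 ≤ t)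
    (hσ : 0 ≤ σ) (ht₁ : 2 * (n + 1) * t ≤ 1) (hσ₁ : 3 * (n + 1) * σ ≤ 1) :
    0 ≤ (1 - 2 * σ) * (1 - t ^ 2) - n * t * σ ^ 2 := by
  have hnt : n * t ≤ 1 / 2 := by nlinarith
  have hσ3 : σ ≤ 1 / 3 := by nlinarith
  have ht2 : t ≤ 1 / 2 := by nlinarith
  nlinarith [mul_le_mul_of_nonneg_right hnt (sq_nonneg σ), mul_nonneg ht ht]

theorem stmt_11_general (n : ℕ) :
    ∃ δ₀ > (0 : ℝ), ∀ δ : ℝ, 0 < δ → δ < δ₀ →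
      ∀ x ∈ Metric.sphere (0 : EuclideanSpace ℝ (Fin (n + 1))) 1,
        δ < x (Fin.last n) → x (Fin.last n) < 3 * δ →
        0 ≤ sphLaplacian (fun y => Real.exp (-(y (Fin.last n) - δ)⁻¹)) x := by
  refine ⟨1 / (6 * (n + 1)), by positivity, fun δ hδ hδ₀ x hx h₁ h₂ => ?_⟩
  have hδn : 6 * (n + 1) * δ < 1 := by
    rwa [lt_div_iff₀ (by positivity), mul_comm] at hδ₀
  rw [sphLaplacian_exp_neg_inv_sub _ (mem_sphere_zero_iff_norm.1 hx) h₁.ne']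
  have hσ : 0 < x (Fin.last n) - δ := sub_pos.2 h₁
  exact mul_nonneg (by positivity)
    (one_sub_two_mul_mul_one_sub_sq_sub_nonneg (by linarith) hσ.le (by nlinarith) (by nlinarith))

/-- There exists `δ₀ > 0` such that for all `0 < δ < δ₀`, the function
`e^{-1/(f-δ)}` is subharmonic on the region `{δ < f < 3δ} ⊂ S^n`, where `f` is the
restriction of `x_{n+1}` to the round sphere. -/
theorem stmt_11 (n : ℕ) (hn : 1 ≤ n) :
    ∃ δ₀ > (0 : ℝ), ∀ δ : ℝ, 0 < δ → δ < δ₀ →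
      ∀ x ∈ Metric.sphere (0 : EuclideanSpace ℝ (Fin (n + 1))) 1,
        δ < x (Fin.last n) → x (Fin.last n) < 3 * δ →
        0 ≤ sphLaplacian (fun y => Real.exp (-(y (Fin.last n) - δ)⁻¹)) x :=
  stmt_11_general n
end
end
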